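/- Let Φ⁰ = ∂(Θ) and Φ¹ = ∂(Θ + Ξ) be two (k+1)-families obtained as coboundaries of k-families Θ and Θ + Ξ indexed over a directed set, where Ξ is k-coherent. Suppose there exist trivializations Υ⁰ of Φ⁰ and Υ¹ of Φ¹ (as (k+1)-coherent families restricted to a chain Q ∪ {f} with f above all of Q) that agree on all k-tuples from Q. Then Ξ restricted to Q^{(k)} is trivial: specifically, ∂(d_f(Υ¹ − Υ⁰)) = (−1)^k (Ξ ↾ Q^{(k)}), where d_f(Υ)_{h⃗} := Υ_{h⃗,f}. -/
import Mathlib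


open Cardinal Set Finset

variable {X : Type*}

/-- The *sottografico* of `f`: pairs `(i, j)` with `j ≤ f i`. -/
def Sotto (f : X → ℕ) : Set (X × ℕ) := {p | p.2 ≤ f p.1}

/-- An increasing `k`-tuple with entries in `P`. -/
def IncTup (P : Set (X → ℕ)) {k : ℕ} (t : Fin k → (X → ℕ)) : Prop :=
  (∀ i, t i ∈ P) ∧ ∀ i j : Fin k, i ≤ j → t i ≤ t j

/-- The alternating-sum coboundary of a family indexed by `k`-tuples. -/
def cob {k : ℕ} (Ψ : (Fin k → (X → ℕ)) → (X × ℕ) → ℤ) :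
    (Fin (k + 1) → (X → ℕ)) → (X × ℕ) → ℤ :=
  fun t p => ∑ i : Fin (k + 1), (-1 : ℤ) ^ (i : ℕ) * Ψ (fun j => t (i.succAbove j)) p

lemma snoc_comp_succAbove_aux {α : Type*} {m : ℕ} (g : Fin (m + 1) → α) (f : α)
    (j : Fin (m + 1)) :
    (fun l => (Fin.snoc g f : Fin (m + 2) → α) ((j.castSucc).succAbove l)) =
      Fin.snoc (fun l' => g (j.succAbove l')) f := by
  funext l
  refine Fin.lastCases ?_ (fun l' => ?_) l
  · have h1 : (j.castSucc).succAbove (Fin.last m) = Fin.last (m + 1) := by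
      rw [Fin.succAbove_castSucc_of_le _ _ (Fin.le_last j)]
      rfl
    simp [h1]
  · have h1 : (j.castSucc).succAbove (l'.castSucc) = (j.succAbove l').castSucc := by
      rcases lt_or_ge l'.castSucc j with h | h
      · rw [Fin.succAbove_of_castSucc_lt _ _ h,
          Fin.succAbove_of_castSucc_lt _ _ (by exact_mod_cast h)]
      · rw [Fin.succAbove_of_le_castSucc _ _ h,
          Fin.succAbove_of_le_castSucc _ _ (by exact_mod_cast h), Fin.succ_castSucc]
    simp [h1]

/-- Let `k = m + 1 ≥ 1`, let `Θ` and `Ξ` be `k`-families indexed over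
a directed set `P`, with `Ξ` `k`-coherent, both extended by zero on tuples containing
`f`, where `Q ⊆ P` is a chain and `f` lies above all of `Q`.  If `Υ⁰` and `Υ¹`
trivialize `Φ⁰ = ∂Θ` and `Φ¹ = ∂(Θ + Ξ)` respectively on increasing `(k+1)`-tuples from
`Q ∪ {f}`, and `Υ⁰`, `Υ¹` agree on all `k`-tuples from `Q`, then
`∂(d_f(Υ¹ − Υ⁰)) =* (−1)^k (Ξ ↾ Q^{(k)})`; in particular `Ξ ↾ Q^{(k)}` is trivial. -/
theorem two_extension_dichotomy (m : ℕ)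
    (P Q : Set (X → ℕ)) (hQP : Q ⊆ P) (hdir : DirectedOn (· ≤ ·) P)
    (hchain : IsChain (· ≤ ·) Q)
    (f : X → ℕ) (hfP : f ∈ P) (hfQ : ∀ q ∈ Q, q ≤ f)
    (Θ Ξ : (Fin (m + 1) → (X → ℕ)) → (X × ℕ) → ℤ)
    -- `Θ` and `Ξ` vanish on tuples containing `f` (the zero extensions `Θ̃`, `Ξ̃`)
    (hΘ0 : ∀ t, (∃ i, t i = f) → Θ t = 0)
    (hΞ0 : ∀ t, (∃ i, t i = f) → Ξ t = 0)
    -- `Ξ` is `k`-coherent on `P`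
    (hΞcoh : ∀ t : Fin (m + 2) → (X → ℕ), IncTup P t →
      {p ∈ Sotto (t 0) | cob Ξ t p ≠ 0}.Finite)
    (Υ₀ Υ₁ : (Fin (m + 1) → (X → ℕ)) → (X × ℕ) → ℤ)
    -- `Υ⁰` trivializes `Φ⁰ = ∂Θ` on `(Q ∪ {f})^{(k+1)}`
    (htriv₀ : ∀ t : Fin (m + 2) → (X → ℕ), IncTup (Q ∪ {f}) t →
      {p ∈ Sotto (t 0) | cob Υ₀ t p ≠ cob Θ t p}.Finite)
    -- `Υ¹` trivializes `Φ¹ = ∂(Θ + Ξ)` on `(Q ∪ {f})^{(k+1)}`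
    (htriv₁ : ∀ t : Fin (m + 2) → (X → ℕ), IncTup (Q ∪ {f}) t →
      {p ∈ Sotto (t 0) | cob Υ₁ t p ≠ cob (fun h q => Θ h q + Ξ h q) t p}.Finite)
    -- `Υ⁰` and `Υ¹` agree on `Q^{(k)}`
    (hagree : ∀ g : Fin (m + 1) → (X → ℕ), IncTup Q g → Υ₀ g = Υ₁ g) :
    ∀ g : Fin (m + 1) → (X → ℕ), IncTup Q g →
      {p ∈ Sotto (g 0) |
        cob (fun (h : Fin m → (X → ℕ)) q => Υ₁ (Fin.snoc h f) q - Υ₀ (Fin.snoc h f) q)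
          g p ≠ (-1 : ℤ) ^ (m + 1) * Ξ g p}.Finite := by
  intro g hg
  set t : Fin (m + 2) → (X → ℕ) := Fin.snoc g f with ht
  have ht0 : t 0 = g 0 := by
    have h00 : (0 : Fin (m + 2)) = (0 : Fin (m + 1)).castSucc := rfl
    rw [ht, h00, Fin.snoc_castSucc]
  have htinc : IncTup (Q ∪ {f}) t := by
    constructor
    · intro i
      refine Fin.lastCases ?_ (fun i' => ?_) i
      · simp [ht, Set.mem_union]
      · simp only [ht, Fin.snoc_castSucc]
        exact Or.inl (hg.1 i')
    · intro i j hij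
      rcases Fin.eq_castSucc_or_eq_last j with ⟨j', rfl⟩ | rfl
      · rcases Fin.eq_castSucc_or_eq_last i with ⟨i', rfl⟩ | rfl
        · simp only [ht, Fin.snoc_castSucc]
          exact hg.2 i' j' (Fin.castSucc_le_castSucc_iff.mp hij)
        · exact absurd hij (Fin.castSucc_lt_last j').not_ge
      · rcases Fin.eq_castSucc_or_eq_last i with ⟨i', rfl⟩ | rfl
        · simp only [ht, Fin.snoc_castSucc, Fin.snoc_last]
          exact hfQ _ (hg.1 i')
        · simp [ht]
  have h0 := htriv₀ t htinc
  have h1 := htriv₁ t htinc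
  refine (h0.union h1).subset ?_
  rintro p ⟨hp, hne⟩
  rw [ht0] at h0 h1 ⊢
  by_contra hcon
  simp only [Set.mem_union, Set.mem_sep_iff, not_or, not_and, not_not] at hcon
  have e0 : cob Υ₀ t p = cob Θ t p := hcon.1 hp
  have hadd : cob (fun h q => Θ h q + Ξ h q) t p = cob Θ t p + cob Ξ t p := by
    show (∑ i : Fin (m + 2), _) = (∑ i : Fin (m + 2), _) + (∑ i : Fin (m + 2), _)
    rw [← Finset.sum_add_distrib]
    exact Finset.sum_congr rfl fun i _ => by ring
  have e1 : cob Υ₁ t p = cob Θ t p + cob Ξ t p := by rw [hcon.2 hp, hadd]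
  -- key splitting of cob over snoc
  have hsplit : ∀ Υ : (Fin (m + 1) → (X → ℕ)) → (X × ℕ) → ℤ,
      cob Υ t p = cob (fun h q => Υ (Fin.snoc h f) q) g p + (-1 : ℤ) ^ (m + 1) * Υ g p := by
    intro Υ
    show (∑ i : Fin (m + 2), (-1 : ℤ) ^ (i : ℕ) * Υ (fun l => t (i.succAbove l)) p) = _
    rw [Fin.sum_univ_castSucc]
    congr 1
    · refine Finset.sum_congr rfl fun j _ => ?_
      rw [Fin.coe_castSucc]
      congr 1
      rw [ht, snoc_comp_succAbove_aux]
    · have : (fun l => t ((Fin.last (m + 1)).succAbove l)) = g := by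
        funext l
        rw [Fin.succAbove_last, ht, Fin.snoc_castSucc]
      rw [this, Fin.val_last]
  -- cob Ξ t p = (-1)^(m+1) * Ξ g p
  have hΞt : cob Ξ t p = (-1 : ℤ) ^ (m + 1) * Ξ g p := by
    rw [hsplit Ξ]
    have : cob (fun h q => Ξ (Fin.snoc h f) q) g p = 0 := by
      show (∑ j : Fin (m + 1), (-1 : ℤ) ^ (j : ℕ) *
        (fun h q => Ξ (Fin.snoc h f) q) (fun l => g (j.succAbove l)) p) = 0
      refine Finset.sum_eq_zero fun j _ => ?_
      have : Ξ (Fin.snoc (fun l => g (j.succAbove l)) f) = 0 :=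
        hΞ0 _ ⟨Fin.last m, Fin.snoc_last _ _⟩
      simp [this]
    rw [this, zero_add]
  have hag : Υ₀ g = Υ₁ g := hagree g hg
  have hD : cob (fun (h : Fin m → (X → ℕ)) q => Υ₁ (Fin.snoc h f) q - Υ₀ (Fin.snoc h f) q) g p
      = cob (fun h q => Υ₁ (Fin.snoc h f) q) g p - cob (fun h q => Υ₀ (Fin.snoc h f) q) g p := by
    show (∑ j : Fin (m + 1), _) = (∑ j : Fin (m + 1), _) - (∑ j : Fin (m + 1), _)
    rw [← Finset.sum_sub_distrib]
    exact Finset.sum_congr rfl fun j _ => by ring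
  apply hne
  have k0 := hsplit Υ₀
  have k1 := hsplit Υ₁
  rw [e0] at k0
  rw [e1] at k1
  rw [hD, hag] at *
  omega
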